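/- Let a, b be rational integers with 3 ≤ a ≤ b−2, and write a = 2A + a₀ with A a nonnegative integer and a₀ ∈ {0,1}. Then (a) N_{K/ℚ}(α(b−a−1, W)) < N_{K/ℚ}(α(b−a−1, W+1)) for all integers W with 0 ≤ W ≤ A, and (b) N_{K/ℚ}(α(b−a−1, W)) < N_{K/ℚ}(α(b−a−2, W)) for all integers W with A+1 ≤ W ≤ a−1. -/

import Mathlib

open IntermediateField

noncomputable section

set_option maxHeartbeats 1000000

/-- The element `α(v,W) = −v + (b(av+W)+1)ρ − (av+W)ρ²` of `ℚ(ρ) ⊆ ℝ`, where `ρ` is the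
largest real root of `x³ − (a+b)x² + abx − 1`. -/
def alphaT (a b : ℤ) (ρ : ℝ) (v W : ℤ) : ℚ⟮ρ⟯ :=
  -((v : ℤ) : ℚ⟮ρ⟯) + ((b * (a * v + W) + 1 : ℤ) : ℚ⟮ρ⟯) * AdjoinSimple.gen ℚ ρ
    - ((a * v + W : ℤ) : ℚ⟮ρ⟯) * AdjoinSimple.gen ℚ ρ ^ 2

/-- Let `3 ≤ a ≤ b−2` and write `a = 2A + a₀` with `A ≥ 0`, `a₀ ∈ {0,1}`.
Then (a) `N(α(b−a−1, W)) < N(α(b−a−1, W+1))` for all `0 ≤ W ≤ A`, and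
(b) `N(α(b−a−1, W)) < N(α(b−a−2, W))` for all `A+1 ≤ W ≤ a−1`. -/
theorem stmt_17 (a b A a₀ : ℤ) (ha : 3 ≤ a) (hab : a ≤ b - 2)
    (hA : 0 ≤ A) (ha₀ : a₀ = 0 ∨ a₀ = 1) (haA : a = 2 * A + a₀)
    (ρ : ℝ) (hroot : ρ ^ 3 - ((a : ℝ) + (b : ℝ)) * ρ ^ 2 + (a : ℝ) * (b : ℝ) * ρ - 1 = 0)
    (hmax : ∀ x : ℝ, x ^ 3 - ((a : ℝ) + (b : ℝ)) * x ^ 2 + (a : ℝ) * (b : ℝ) * x - 1 = 0 → x ≤ ρ)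
    (hdeg : Module.finrank ℚ ℚ⟮ρ⟯ = 3) :
    (∀ W : ℤ, 0 ≤ W → W ≤ A →
      Algebra.norm ℚ (alphaT a b ρ (b - a - 1) W) <
        Algebra.norm ℚ (alphaT a b ρ (b - a - 1) (W + 1))) ∧
    (∀ W : ℤ, A + 1 ≤ W → W ≤ a - 1 →
      Algebra.norm ℚ (alphaT a b ρ (b - a - 1) W) <
        Algebra.norm ℚ (alphaT a b ρ (b - a - 2) W)) := by
  classical
  -- ρ is integral over ℚ
  have hint : IsIntegral ℚ ρ := by
    refine ⟨Polynomial.X ^ 3 - Polynomial.C ((a : ℚ) + b) * Polynomial.X ^ 2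
      + Polynomial.C ((a : ℚ) * b) * Polynomial.X - Polynomial.C 1, ?_, ?_⟩
    · monicity!
    · rw [← Polynomial.aeval_def]
      simp only [map_sub, map_add, map_mul, map_pow, map_one, map_intCast, Polynomial.aeval_X,
        Polynomial.aeval_C]
      push_cast
      linear_combination hroot
  set γ : ℚ⟮ρ⟯ := AdjoinSimple.gen ℚ ρ with hγdef
  have hmapγ : algebraMap ℚ⟮ρ⟯ ℝ γ = ρ := AdjoinSimple.algebraMap_gen ℚ ρ
  have hcube : γ ^ 3 = ((a : ℚ⟮ρ⟯) + b) * γ ^ 2 - ((a : ℚ⟮ρ⟯) * b) * γ + 1 := by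
    apply (algebraMap ℚ⟮ρ⟯ ℝ).injective
    simp only [map_add, map_sub, map_mul, map_pow, map_one, map_intCast, hmapγ]
    linear_combination hroot
  -- power basis of dimension 3
  have hdim3 : (minpoly ℚ ρ).natDegree = 3 := by
    rw [← IntermediateField.adjoin.finrank hint, hdeg]
  let pb := IntermediateField.adjoin.powerBasis hint
  have hpbdim : pb.dim = 3 := hdim3
  let B : Module.Basis (Fin 3) ℚ ℚ⟮ρ⟯ := pb.basis.reindex (finCongr hpbdim)
  have hB : ∀ i : Fin 3, B i = γ ^ (i : ℕ) := by
    intro i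
    simp only [B, Module.Basis.reindex_apply, PowerBasis.basis_eq_pow]
    congr 1
  have hB0 : B 0 = 1 := by rw [hB 0]; norm_num
  have hB1 : B 1 = γ := by rw [hB 1]; norm_num
  have hB2 : B 2 = γ ^ 2 := by rw [hB 2]; norm_num
  have repr3 : ∀ (y : ℚ⟮ρ⟯) (c : Fin 3 → ℚ), y = c 0 • B 0 + c 1 • B 1 + c 2 • B 2 →
      ∀ i, B.repr y i = c i := by
    intro y c hy i
    have hy' : y = ∑ j, c j • B j := by rw [Fin.sum_univ_three]; exact hy
    rw [hy']
    exact congrFun (B.repr_sum_self c) i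
  -- the key norm computation
  have key : ∀ m n k : ℤ,
      Algebra.norm ℚ (((m : ℤ) : ℚ⟮ρ⟯) + ((n : ℤ) : ℚ⟮ρ⟯) * γ + ((k : ℤ) : ℚ⟮ρ⟯) * γ ^ 2)
        = ((k^3 + n^3 - 3*m*n*k + m^3 + b*n^2*k - 2*b*m*k^2 + b*m^2*n + b^2*m^2*k
            + a*n^2*k - 2*a*m*k^2 + a*m^2*n + a*b*n*k^2 + a*b*m*n^2 + a*b^2*m*n*k
            + a^2*m^2*k + a^2*b*m*n*k + a^2*b^2*m*k^2 : ℤ) : ℚ) := by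
    intro m n k
    set x : ℚ⟮ρ⟯ := ((m : ℤ) : ℚ⟮ρ⟯) + ((n : ℤ) : ℚ⟮ρ⟯) * γ + ((k : ℤ) : ℚ⟮ρ⟯) * γ ^ 2
      with hxdef
    have smul_eq : ∀ (q : ℚ) (z : ℚ⟮ρ⟯), q • z = algebraMap ℚ ℚ⟮ρ⟯ q * z :=
      fun q z => Algebra.smul_def q z
    have h0 : x * B 0 = ((m : ℚ)) • B 0 + ((n : ℚ)) • B 1 + ((k : ℚ)) • B 2 := by
      simp only [hB0, hB1, hB2, smul_eq, map_intCast]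
      ring
    have h1 : x * B 1 = ((k : ℚ)) • B 0 + ((m : ℚ) - (a : ℚ) * b * k) • B 1
        + ((n : ℚ) + ((a : ℚ) + b) * k) • B 2 := by
      simp only [hB0, hB1, hB2, smul_eq, map_sub, map_add, map_mul, map_intCast]
      linear_combination ((k : ℤ) : ℚ⟮ρ⟯) * hcube
    have h2 : x * B 2 = ((n : ℚ) + ((a : ℚ) + b) * k) • B 0
        + (-((a : ℚ) * b) * n + (1 - (a : ℚ) * b * ((a : ℚ) + b)) * k) • B 1
        + ((m : ℚ) + ((a : ℚ) + b) * n + (((a : ℚ) + b) ^ 2 - (a : ℚ) * b) * k) • B 2 := by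
      simp only [hB0, hB1, hB2, smul_eq, map_sub, map_add, map_mul, map_pow, map_one,
        map_neg, map_intCast]
      linear_combination (((n : ℤ) : ℚ⟮ρ⟯) + ((a : ℚ⟮ρ⟯) + (b : ℚ⟮ρ⟯)) * ((k : ℤ) : ℚ⟮ρ⟯)
        + ((k : ℤ) : ℚ⟮ρ⟯) * γ) * hcube
    have r0 := repr3 _ ![(m : ℚ), (n : ℚ), (k : ℚ)] h0
    have r1 := repr3 _ ![((k : ℚ)), ((m : ℚ) - (a : ℚ) * b * k),
      ((n : ℚ) + ((a : ℚ) + b) * k)] h1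
    have r2 := repr3 _ ![((n : ℚ) + ((a : ℚ) + b) * k),
      (-((a : ℚ) * b) * n + (1 - (a : ℚ) * b * ((a : ℚ) + b)) * k),
      ((m : ℚ) + ((a : ℚ) + b) * n + (((a : ℚ) + b) ^ 2 - (a : ℚ) * b) * k)] h2
    rw [Algebra.norm_eq_matrix_det B, Matrix.det_fin_three]
    simp only [Algebra.leftMulMatrix_eq_repr_mul, r0, r1, r2]
    simp only [Matrix.cons_val_zero, Matrix.cons_val_one, Matrix.head_cons,
      Matrix.cons_val_two, Matrix.tail_cons]
    push_cast
    ring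
  -- rewrite alphaT in the canonical form
  have halpha : ∀ v W : ℤ, alphaT a b ρ v W
      = (((-v : ℤ) : ℚ⟮ρ⟯)) + (((b * (a * v + W) + 1 : ℤ)) : ℚ⟮ρ⟯) * γ
        + (((-(a * v + W) : ℤ)) : ℚ⟮ρ⟯) * γ ^ 2 := by
    intro v W
    unfold alphaT
    push_cast
    ring
  have hnorm : ∀ v W : ℤ, Algebra.norm ℚ (alphaT a b ρ v W)
      = ((1 - W^3 - 3*v*W - v^3 + 2*b*W - b*v*W^2 + b*v^2 + b^2*W^2 - a*W - a*v*W^2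
          - 2*a*v^2 - a*b*W^2 + a*b*v - a*b*v^2*W + a*b^2*v*W - a^2*v - a^2*b*v*W : ℤ) : ℚ) := by
    intro v W
    rw [halpha v W]
    rw [key (-v) (b * (a * v + W) + 1) (-(a * v + W))]
    push_cast
    ring
  constructor
  · intro W hW0 hWA
    rw [hnorm, hnorm]
    have h2W : 2 * W ≤ a := by rcases ha₀ with h | h <;> omega
    rw [Int.cast_lt]
    have t1 : 0 ≤ (b - a - 2) * (a * b - 2 * W * (a - 1)) := by
      have hin : 0 ≤ a * b - 2 * W * (a - 1) := by
        nlinarith [mul_nonneg (show (0:ℤ) ≤ a - 2 * W by omega) (show (0:ℤ) ≤ a - 1 by omega),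
          mul_nonneg (show (0:ℤ) ≤ a by omega) (show (0:ℤ) ≤ b - a + 1 by omega)]
      exact mul_nonneg (by omega) hin
    have t2 : 0 ≤ a * (a - 2 * W) := mul_nonneg (by omega) (by omega)
    have t3 : 0 ≤ W * (a - 2 * W) := mul_nonneg hW0 (by omega)
    have t4 : 0 ≤ a * W := mul_nonneg (by omega) hW0
    nlinarith [t1, t2, t3, t4]
  · intro W hW1 hWa
    rw [hnorm, hnorm]
    have h2W : a + 1 ≤ 2 * W := by rcases ha₀ with h | h <;> omega
    have hW0 : 1 ≤ W := by omega
    rw [Int.cast_lt]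
    have u1 : 0 ≤ (b - a - 2) ^ 2 * (1 + a * W) := by
      have h : 0 ≤ 1 + a * W := by
        nlinarith [mul_nonneg (show (0:ℤ) ≤ a by omega) (show (0:ℤ) ≤ W by omega)]
      exact mul_nonneg (sq_nonneg _) h
    have u2 : 0 ≤ (b - a - 2) * (a - 2 + a * W + W ^ 2 + a ^ 2 * W) := by
      have h : 0 ≤ a - 2 + a * W + W ^ 2 + a ^ 2 * W := by
        nlinarith [mul_nonneg (show (0:ℤ) ≤ a by omega) (show (0:ℤ) ≤ W by omega),
          mul_nonneg (mul_nonneg (show (0:ℤ) ≤ a by omega) (show (0:ℤ) ≤ a by omega))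
            (show (0:ℤ) ≤ W by omega), sq_nonneg W]
      exact mul_nonneg (by omega) h
    have u3 : 0 ≤ a * W * (2 * W - a - 1) :=
      mul_nonneg (mul_nonneg (by omega) (by omega)) (by omega)
    have u4 : 0 ≤ W * (2 * W - a - 1) := mul_nonneg (by omega) (by omega)
    nlinarith [u1, u2, u3, u4]
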